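/- arXiv:1501.01209 — 5 statements merged into one kernel-verified Lean document; each statement's English description precedes it below -/
import Mathlib

section
/- Suppose the scalars u_t ∈ ℝ and λ_t > 0 (t = 1,…,T) satisfy the Afriat inequalities u_τ − u_t − λ_t p_t·(x_τ − x_t) ≤ 0 for all t, τ ∈ {1,…,T}. Then the function u(x) = min_{t ∈ {1,…,T}} { u_t + λ_t p_t·(x − x_t) } satisfies u(x_t) = u_t for every t, and u rationalizes the dataset: for every t and every x ∈ ℝ^m with p_t·x ≤ p_t·x_t one has u(x) ≤ u(x_t), i.e., x_t maximizes u over the budget set {x : p_t·x ≤ p_t·x_t}. -/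
/-- The Afriat utility: the lower envelope of the hyperplanes
`y ↦ u t + λ t * p t ⬝ (y - x t)`. -/
noncomputable def afriatUtility {m T : ℕ}
    (hT : (Finset.univ : Finset (Fin T)).Nonempty)
    (p x : Fin T → Fin m → ℝ) (u lam : Fin T → ℝ) (y : Fin m → ℝ) : ℝ :=
  Finset.univ.inf' hT fun t => u t + lam t * ∑ i, p t i * (y i - x t i)

section AfriatUtility

variable {m T : ℕ} (hT : (Finset.univ : Finset (Fin T)).Nonempty)
  (p x : Fin T → Fin m → ℝ) (u lam : Fin T → ℝ)

theorem afriatUtility_le (t : Fin T) (y : Fin m → ℝ) :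
    afriatUtility hT p x u lam y ≤ u t + lam t * ∑ i, p t i * (y i - x t i) :=
  Finset.inf'_le _ (Finset.mem_univ t)

/-- The Afriat inequalities say precisely that at `x t` no hyperplane lies below the `t`-th one,
which passes through `(x t, u t)`. -/
theorem afriatUtility_apply_data
    (hAfriat : ∀ t τ : Fin T, u τ - u t - lam t * ∑ i, p t i * (x τ i - x t i) ≤ 0)
    (t : Fin T) : afriatUtility hT p x u lam (x t) = u t := by
  apply le_antisymm
  · simpa using afriatUtility_le hT p x u lam t (x t)
  · refine Finset.le_inf' _ _ fun s _ => ?_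
    linarith [hAfriat s t]

theorem afriatUtility_le_of_budget {t : Fin T} (hlam : 0 ≤ lam t) {y : Fin m → ℝ}
    (hy : ∑ i, p t i * y i ≤ ∑ i, p t i * x t i) :
    afriatUtility hT p x u lam y ≤ u t := by
  have hcost : ∑ i, p t i * (y i - x t i) ≤ 0 := by
    simp only [mul_sub, Finset.sum_sub_distrib]
    linarith
  calc afriatUtility hT p x u lam y ≤ u t + lam t * ∑ i, p t i * (y i - x t i) :=
        afriatUtility_le hT p x u lam t y
    _ ≤ u t := add_le_of_nonpos_right (mul_nonpos_of_nonneg_of_nonpos hlam hcost)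

end AfriatUtility

theorem afriat_utility_rationalizes_general {m T : ℕ} (hT : 0 < T)
    (p x : Fin T → Fin m → ℝ) (u lam : Fin T → ℝ)
    (hlam : ∀ t, 0 < lam t)
    (hAfriat : ∀ t τ : Fin T,
      u τ - u t - lam t * ∑ i, p t i * (x τ i - x t i) ≤ 0) :
    (∀ t : Fin T,
      afriatUtility (Finset.univ_nonempty_iff.mpr ⟨⟨0, hT⟩⟩) p x u lam (x t) = u t) ∧
    (∀ t : Fin T, ∀ y : Fin m → ℝ,
      (∑ i, p t i * y i) ≤ (∑ i, p t i * x t i) →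
      afriatUtility (Finset.univ_nonempty_iff.mpr ⟨⟨0, hT⟩⟩) p x u lam y ≤
        afriatUtility (Finset.univ_nonempty_iff.mpr ⟨⟨0, hT⟩⟩) p x u lam (x t)) := by
  have hinterp :=
    afriatUtility_apply_data (Finset.univ_nonempty_iff.mpr ⟨⟨0, hT⟩⟩) p x u lam hAfriat
  refine ⟨hinterp, fun t y hy => ?_⟩
  rw [hinterp t]
  exact afriatUtility_le_of_budget _ p x u lam (hlam t).le hy

/-- If the Afriat inequalities hold with positive multipliers, the constructed
utility interpolates the data (`u (x t) = u t`) and rationalizes the dataset: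
`x t` maximizes `u` over the budget set `{y : p t ⬝ y ≤ p t ⬝ x t}`. -/
theorem afriat_utility_rationalizes {m T : ℕ} (hT : 0 < T)
    (p x : Fin T → Fin m → ℝ) (u lam : Fin T → ℝ)
    (hp : ∀ t i, 0 < p t i)
    (hlam : ∀ t, 0 < lam t)
    (hAfriat : ∀ t τ : Fin T,
      u τ - u t - lam t * ∑ i, p t i * (x τ i - x t i) ≤ 0) :
    (∀ t : Fin T,
      afriatUtility (Finset.univ_nonempty_iff.mpr ⟨⟨0, hT⟩⟩) p x u lam (x t) = u t) ∧
    (∀ t : Fin T, ∀ y : Fin m → ℝ,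
      (∑ i, p t i * y i) ≤ (∑ i, p t i * x t i) →
      afriatUtility (Finset.univ_nonempty_iff.mpr ⟨⟨0, hT⟩⟩) p x u lam y ≤
        afriatUtility (Finset.univ_nonempty_iff.mpr ⟨⟨0, hT⟩⟩) p x u lam (x t)) :=
  afriat_utility_rationalizes_general hT p x u lam hlam hAfriat
end

section
/- If u : ℝ^m → ℝ is locally non-satiated and for every t ∈ {1,…,T} the action x_t maximizes u over the budget set {x ∈ ℝ^m : p_t·x ≤ p_t·x_t}, then the dataset D = {(p_t, x_t)} satisfies the Generalized Axiom of Revealed Preference (GARP): for every k ≤ T, if p_t·x_t ≥ p_t·x_{t+1} for all t ≤ k−1, then p_k·x_k ≤ p_k·x_1. -/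
/-- Dot product of two vectors in `ℝ^m`. -/
def dotp {m : ℕ} (p x : Fin m → ℝ) : ℝ := ∑ i, p i * x i

/-- The Generalized Axiom of Revealed Preference: for every `k ≤ T`, if
`p t ⬝ x t ≥ p t ⬝ x (t+1)` for all `t ≤ k - 1`, then `p k ⬝ x k ≤ p k ⬝ x 1`. -/
def GARP {m T : ℕ} (p x : Fin T → Fin m → ℝ) : Prop :=
  ∀ k : Fin T,
    (∀ t : Fin T, (ht : t < k) →
      dotp (p t) (x ⟨t.val + 1, lt_of_le_of_lt (Nat.succ_le_of_lt ht) k.isLt⟩)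
        ≤ dotp (p t) (x t)) →
    dotp (p k) (x k) ≤ dotp (p k) (x ⟨0, lt_of_le_of_lt (Nat.zero_le k.val) k.isLt⟩)

/-!
Chaining the revealed preferences `x t ≽ x (t+1)` gives `u (x k) ≤ u (x 0)`. If `x 0` were
strictly cheaper than `x k` at prices `p k`, local non-satiation would give a bundle `y` near
`x 0`, still strictly cheaper, with `u (x 0) < u y`; but `y` is affordable at `t = k`, so
`u y ≤ u (x k)`, a contradiction.
-/

open Topology

def LocallyNonsatiated {E β : Type*} [SeminormedAddCommGroup E] [LT β] (u : E → β) : Prop :=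
  ∀ (y : E) (ε : ℝ), 0 < ε → ∃ y' : E, ‖y' - y‖ < ε ∧ u y < u y'

theorem LocallyNonsatiated.exists_lt_of_mem_nhds {E β : Type*} [SeminormedAddCommGroup E] [LT β]
    {u : E → β} (hu : LocallyNonsatiated u) {x : E} {U : Set E} (hU : U ∈ 𝓝 x) :
    ∃ y ∈ U, u x < u y := by
  obtain ⟨ε, hε, hball⟩ := Metric.mem_nhds_iff.1 hU
  obtain ⟨y, hy, hlt⟩ := hu x ε hε
  exact ⟨y, hball (mem_ball_iff_norm.2 hy), hlt⟩

theorem continuous_dotp {m : ℕ} (p : Fin m → ℝ) : Continuous (dotp p) := by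
  unfold dotp
  fun_prop

theorem apply_le_apply_zero_of_succ_le {α : Type*} [Preorder α] {T : ℕ} (f : Fin T → α)
    (k : Fin T)
    (hstep : ∀ t : Fin T, (ht : t < k) →
      f ⟨t.val + 1, lt_of_le_of_lt (Nat.succ_le_of_lt ht) k.isLt⟩ ≤ f t) :
    f k ≤ f ⟨0, lt_of_le_of_lt (Nat.zero_le k.val) k.isLt⟩ := by
  suffices ∀ n (hn : n < T), n ≤ k.val → f ⟨n, hn⟩ ≤ f ⟨0, lt_of_le_of_lt (Nat.zero_le n) hn⟩ from
    this k.val k.isLt le_rfl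
  intro n
  induction n with
  | zero => exact fun _ _ => le_rfl
  | succ n ih =>
    intro hn hnk
    exact (hstep ⟨n, by omega⟩ (Fin.mk_lt_of_lt_val hnk)).trans (ih _ (by omega))

theorem utility_maximization_implies_GARP_general {m T : ℕ}
    (p x : Fin T → Fin m → ℝ)
    (u : (Fin m → ℝ) → ℝ)
    (hns : ∀ (y : Fin m → ℝ) (ε : ℝ), 0 < ε → ∃ y' : Fin m → ℝ, ‖y' - y‖ < ε ∧ u y < u y')
    (hmax : ∀ t : Fin T, ∀ y : Fin m → ℝ,
      dotp (p t) y ≤ dotp (p t) (x t) → u y ≤ u (x t)) :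
    GARP p x := by
  intro k hchain
  have hu : u (x k) ≤ u (x ⟨0, _⟩) :=
    apply_le_apply_zero_of_succ_le (u ∘ x) k fun t ht => hmax t _ (hchain t ht)
  by_contra! hcheaper
  have hnhds : {y | dotp (p k) y < dotp (p k) (x k)} ∈ 𝓝 (x ⟨0, _⟩) :=
    (isOpen_lt (continuous_dotp _) continuous_const).mem_nhds hcheaper
  obtain ⟨y, hy_budget, hy_better⟩ := LocallyNonsatiated.exists_lt_of_mem_nhds hns hnhds
  exact (hmax k y (le_of_lt hy_budget)).not_gt (hu.trans_lt hy_better)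

/-- If `u` is locally non-satiated and each `x t` maximizes `u` over the budget
set `{y : p t ⬝ y ≤ p t ⬝ x t}`, then the dataset satisfies GARP. -/
theorem utility_maximization_implies_GARP {m T : ℕ}
    (p x : Fin T → Fin m → ℝ)
    (hp : ∀ t i, 0 < p t i)
    (u : (Fin m → ℝ) → ℝ)
    (hns : ∀ (y : Fin m → ℝ) (ε : ℝ), 0 < ε → ∃ y' : Fin m → ℝ, ‖y' - y‖ < ε ∧ u y < u y')
    (hmax : ∀ t : Fin T, ∀ y : Fin m → ℝ,
      dotp (p t) y ≤ dotp (p t) (x t) → u y ≤ u (x t)) :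
    GARP p x :=
  utility_maximization_implies_GARP_general p x u hns hmax
end

section
/- Suppose the scalars v_t ∈ ℝ and λ_t^i > 0 (t = 1,…,T, i = 1,…,n) satisfy the multi-agent Afriat inequalities v_τ − v_t − Σ_{i=1}^n λ_t^i p_t·(x_τ^i − x_t^i) ≤ 0 for all t, τ ∈ {1,…,T}. Then the function V̂(x^1,…,x^n) = min_{t ∈ {1,…,T}} { v_t + Σ_{i=1}^n λ_t^i p_t·(x^i − x_t^i) } is concave on (ℝ^m)^n, satisfies V̂(x_t^1,…,x_t^n) = v_t for every t, and for every t the joint profile (x_t^1,…,x_t^n) maximizes V̂ over all (x^1,…,x^n) satisfying the budget constraints p_t·x^i ≤ p_t·x_t^i for every i ∈ {1,…,n}. -/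
/-!
The potential is the lower envelope of the affine functions `y ↦ v t + ℓ t (y - x t)` with
`ℓ t w = ∑ i, λ t i * p t ⬝ w i`, hence concave. The `t`-th plane passes through `(x t, v t)`,
and the Afriat inequalities say precisely that every plane lies above `v τ` at `x τ`, so the
envelope interpolates the data. On the budget set of observation `t` we have
`ℓ t (y - x t) ≤ 0` because the multipliers are nonnegative, so already the `t`-th plane, and
with it the envelope, is at most `v t` there.
-/

/-- The constructed multi-agent potential: the lower envelope of the hyperplanes
`y ↦ v t + ∑ i, λ t i * p t ⬝ (y i - x t i)`. -/
noncomputable def multiPotential {m n T : ℕ}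
    (hT : (Finset.univ : Finset (Fin T)).Nonempty)
    (p : Fin T → Fin m → ℝ) (x : Fin T → Fin n → Fin m → ℝ)
    (v : Fin T → ℝ) (lam : Fin T → Fin n → ℝ)
    (y : Fin n → Fin m → ℝ) : ℝ :=
  Finset.univ.inf' hT fun t => v t + ∑ i, lam t i * ∑ j, p t j * (y i j - x t i j)

theorem ConcaveOn.finset_inf' {𝕜 E β ι : Type*} [Semiring 𝕜] [PartialOrder 𝕜] [AddCommMonoid E]
    [AddCommMonoid β] [LinearOrder β] [IsOrderedAddMonoid β] [SMul 𝕜 E] [Module 𝕜 β]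
    [PosSMulStrictMono 𝕜 β] {D : Set E} {s : Finset ι} (hs : s.Nonempty) {f : ι → E → β}
    (hf : ∀ i ∈ s, ConcaveOn 𝕜 D (f i)) : ConcaveOn 𝕜 D (s.inf' hs f) :=
  Finset.inf'_induction hs f (fun _ h₁ _ h₂ ↦ h₁.inf h₂) hf

section AfriatEnvelope

variable {𝕜 E ι : Type*} [Ring 𝕜] [LinearOrder 𝕜] [AddCommGroup E] [Module 𝕜 E] [Fintype ι]

def AfriatInequalities (x : ι → E) (v : ι → 𝕜) (ℓ : ι → E →ₗ[𝕜] 𝕜) : Prop :=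
  ∀ t τ, v τ ≤ v t + ℓ t (x τ - x t)

def afriatEnvelope (hι : (Finset.univ : Finset ι).Nonempty) (x : ι → E) (v : ι → 𝕜)
    (ℓ : ι → E →ₗ[𝕜] 𝕜) (y : E) : 𝕜 :=
  Finset.univ.inf' hι fun t ↦ v t + ℓ t (y - x t)

variable {hι : (Finset.univ : Finset ι).Nonempty} {x : ι → E} {v : ι → 𝕜} {ℓ : ι → E →ₗ[𝕜] 𝕜}

theorem concaveOn_afriatEnvelope [IsStrictOrderedRing 𝕜] :
    ConcaveOn 𝕜 Set.univ (afriatEnvelope hι x v ℓ) := by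
  have hplane (t : ι) : ConcaveOn 𝕜 Set.univ fun y ↦ v t + ℓ t (y - x t) :=
    (((ℓ t).concaveOn convex_univ).add_const (v t - ℓ t (x t))).congr fun y _ ↦ by
      simp only [Pi.add_apply, map_sub]
      abel
  have henvelope :
      afriatEnvelope hι x v ℓ = Finset.univ.inf' hι fun t y ↦ v t + ℓ t (y - x t) := by
    ext y
    simp only [afriatEnvelope, Finset.inf'_apply]
  rw [henvelope]
  exact ConcaveOn.finset_inf' hι fun t _ ↦ hplane t

theorem afriatEnvelope_apply_self (hA : AfriatInequalities x v ℓ) (τ : ι) :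
    afriatEnvelope hι x v ℓ (x τ) = v τ :=
  le_antisymm (Finset.inf'_le_of_le _ (Finset.mem_univ τ) (by simp))
    (Finset.le_inf' _ _ fun t _ ↦ hA t τ)

theorem afriatEnvelope_le_apply_self [IsOrderedAddMonoid 𝕜] (hA : AfriatInequalities x v ℓ)
    {t : ι} {y : E} (hy : ℓ t (y - x t) ≤ 0) :
    afriatEnvelope hι x v ℓ y ≤ afriatEnvelope hι x v ℓ (x t) := by
  rw [afriatEnvelope_apply_self hA]
  exact Finset.inf'_le_of_le _ (Finset.mem_univ t) (add_le_of_nonpos_right hy)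

end AfriatEnvelope

section WeightedExpenditure

variable {R ι κ : Type*} [CommSemiring R] [Fintype ι] [Fintype κ]

def weightedExpenditure (p : κ → R) (lam : ι → R) : (ι → κ → R) →ₗ[R] R where
  toFun w := ∑ i, lam i * p ⬝ᵥ w i
  map_add' w w' := by simp only [Pi.add_apply, dotProduct_add, mul_add, Finset.sum_add_distrib]
  map_smul' c w := by
    simp only [Pi.smul_apply, dotProduct_smul, smul_eq_mul, RingHom.id_apply, Finset.mul_sum]
    exact Finset.sum_congr rfl fun i _ ↦ by ring

theorem weightedExpenditure_nonpos [PartialOrder R] [IsOrderedRing R] {p : κ → R} {lam : ι → R}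
    {w : ι → κ → R} (hlam : ∀ i, 0 ≤ lam i) (hw : ∀ i, p ⬝ᵥ w i ≤ 0) :
    weightedExpenditure p lam w ≤ 0 :=
  Finset.sum_nonpos (s := Finset.univ) fun i _ ↦ mul_nonpos_of_nonneg_of_nonpos (hlam i) (hw i)

end WeightedExpenditure

theorem multiPotential_eq_afriatEnvelope {m n T : ℕ}
    (hT : (Finset.univ : Finset (Fin T)).Nonempty)
    (p : Fin T → Fin m → ℝ) (x : Fin T → Fin n → Fin m → ℝ)
    (v : Fin T → ℝ) (lam : Fin T → Fin n → ℝ) :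
    multiPotential hT p x v lam =
      afriatEnvelope hT x v fun t ↦ weightedExpenditure (p t) (lam t) :=
  rfl

theorem multi_afriat_potential_properties_general {m n T : ℕ} (hT : 0 < T)
    (p : Fin T → Fin m → ℝ) (x : Fin T → Fin n → Fin m → ℝ)
    (v : Fin T → ℝ) (lam : Fin T → Fin n → ℝ)
    (hlam : ∀ t i, 0 < lam t i)
    (hAfriat : ∀ t τ : Fin T,
      v τ - v t - ∑ i, lam t i * ∑ j, p t j * (x τ i j - x t i j) ≤ 0) :
    ConcaveOn ℝ Set.univ
      (multiPotential (Finset.univ_nonempty_iff.mpr ⟨⟨0, hT⟩⟩) p x v lam) ∧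
    (∀ t : Fin T,
      multiPotential (Finset.univ_nonempty_iff.mpr ⟨⟨0, hT⟩⟩) p x v lam (x t) = v t) ∧
    (∀ t : Fin T, ∀ y : Fin n → Fin m → ℝ,
      (∀ i : Fin n, (∑ j, p t j * y i j) ≤ (∑ j, p t j * x t i j)) →
      multiPotential (Finset.univ_nonempty_iff.mpr ⟨⟨0, hT⟩⟩) p x v lam y ≤
        multiPotential (Finset.univ_nonempty_iff.mpr ⟨⟨0, hT⟩⟩) p x v lam (x t)) := by
  have hA : AfriatInequalities x v fun t ↦ weightedExpenditure (p t) (lam t) := fun t τ ↦ by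
    rw [← sub_nonpos, ← sub_sub]
    exact hAfriat t τ
  simp only [multiPotential_eq_afriatEnvelope]
  refine ⟨concaveOn_afriatEnvelope, afriatEnvelope_apply_self hA, fun t y hbudget ↦ ?_⟩
  refine afriatEnvelope_le_apply_self hA (weightedExpenditure_nonpos (fun i ↦ (hlam t i).le) ?_)
  intro i
  rw [Pi.sub_apply, dotProduct_sub, sub_nonpos]
  exact hbudget i

/-- If the multi-agent Afriat inequalities hold with positive multipliers, the
constructed potential is concave, interpolates the data, and each observed joint
profile maximizes it subject to the individual budget constraints. -/
theorem multi_afriat_potential_properties {m n T : ℕ} (hT : 0 < T)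
    (p : Fin T → Fin m → ℝ) (x : Fin T → Fin n → Fin m → ℝ)
    (v : Fin T → ℝ) (lam : Fin T → Fin n → ℝ)
    (hp : ∀ t j, 0 < p t j)
    (hlam : ∀ t i, 0 < lam t i)
    (hAfriat : ∀ t τ : Fin T,
      v τ - v t - ∑ i, lam t i * ∑ j, p t j * (x τ i j - x t i j) ≤ 0) :
    ConcaveOn ℝ Set.univ
      (multiPotential (Finset.univ_nonempty_iff.mpr ⟨⟨0, hT⟩⟩) p x v lam) ∧
    (∀ t : Fin T,
      multiPotential (Finset.univ_nonempty_iff.mpr ⟨⟨0, hT⟩⟩) p x v lam (x t) = v t) ∧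
    (∀ t : Fin T, ∀ y : Fin n → Fin m → ℝ,
      (∀ i : Fin n, (∑ j, p t j * y i j) ≤ (∑ j, p t j * x t i j)) →
      multiPotential (Finset.univ_nonempty_iff.mpr ⟨⟨0, hT⟩⟩) p x v lam y ≤
        multiPotential (Finset.univ_nonempty_iff.mpr ⟨⟨0, hT⟩⟩) p x v lam (x t)) :=
  multi_afriat_potential_properties_general hT p x v lam hlam hAfriat
end

section
/- Suppose the scalars v_t ∈ ℝ and λ_t^i > 0 (t = 1,…,T, i = 1,…,n) satisfy the multi-agent Afriat inequalities v_τ − v_t − Σ_{i=1}^n λ_t^i p_t·(x_τ^i − x_t^i) ≤ 0 for all t, τ ∈ {1,…,T}, and let V̂(x^1,…,x^n) = min_{t} { v_t + Σ_{i=1}^n λ_t^i p_t·(x^i − x_t^i) }. Then the data is consistent with Nash equilibrium play with respect to the potential V̂: for every t and every agent i, the action x_t^i maximizes the function x ↦ V̂(x, x_t^{−i}) over the budget set {x ∈ ℝ^m : p_t·x ≤ p_t·x_t^i}, where x_t^{−i} denotes the actions of the other n−1 agents held fixed at their observed values. -/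
/-!
`V̂` is the lower envelope of the hyperplanes `H_t(y) = v_t + ∑ᵢ λ_tⁱ p_t·(yⁱ - x_tⁱ)`. The Afriat
inequalities say exactly that every `H_τ` lies above `v_t` at `x_t`, so `V̂(x_t) = v_t = H_t(x_t)`.
Replacing agent `i`'s action by an affordable `z` changes `H_t` by `λ_tⁱ p_t·(z - x_tⁱ) ≤ 0`, and
`V̂ ≤ H_t` everywhere.
-/

open Finset

lemma sum_mul_sum_update_sub {ι κ : Type*} [Fintype ι] [DecidableEq ι] [Fintype κ]
    (c : ι → ℝ) (q : κ → ℝ) (y : ι → κ → ℝ) (i : ι) (z : κ → ℝ) :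
    ∑ i', c i' * ∑ j, q j * (Function.update y i z i' j - y i' j) =
      c i * ∑ j, q j * (z j - y i j) := by
  rw [sum_eq_single i (fun i' _ hi' => by simp [Function.update_of_ne hi'])
    (fun hi => absurd (mem_univ i) hi)]
  simp

lemma sum_mul_sub_nonpos_of_le {κ : Type*} [Fintype κ] {q z y : κ → ℝ}
    (h : ∑ j, q j * z j ≤ ∑ j, q j * y j) : ∑ j, q j * (z j - y j) ≤ 0 := by
  simpa [mul_sub, sum_sub_distrib] using h

section multiPotential

variable {m n T : ℕ} (hT : (univ : Finset (Fin T)).Nonempty)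
  (p : Fin T → Fin m → ℝ) (x : Fin T → Fin n → Fin m → ℝ) (v : Fin T → ℝ) (lam : Fin T → Fin n → ℝ)

lemma multiPotential_le (t : Fin T) (y : Fin n → Fin m → ℝ) :
    multiPotential hT p x v lam y ≤ v t + ∑ i, lam t i * ∑ j, p t j * (y i j - x t i j) :=
  inf'_le _ (mem_univ t)

lemma multiPotential_apply_self
    (hAfriat : ∀ t τ : Fin T, v τ - v t - ∑ i, lam t i * ∑ j, p t j * (x τ i j - x t i j) ≤ 0)
    (t : Fin T) : multiPotential hT p x v lam (x t) = v t := by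
  refine le_antisymm ((multiPotential_le hT p x v lam t (x t)).trans_eq (by simp)) ?_
  exact le_inf' _ _ fun τ _ => by linarith [hAfriat τ t]

end multiPotential

theorem multi_afriat_nash_play_general {m n T : ℕ} (hT : 0 < T)
    (p : Fin T → Fin m → ℝ) (x : Fin T → Fin n → Fin m → ℝ)
    (v : Fin T → ℝ) (lam : Fin T → Fin n → ℝ)
    (hlam : ∀ t i, 0 < lam t i)
    (hAfriat : ∀ t τ : Fin T,
      v τ - v t - ∑ i, lam t i * ∑ j, p t j * (x τ i j - x t i j) ≤ 0) :
    ∀ t : Fin T, ∀ i : Fin n, ∀ z : Fin m → ℝ,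
      (∑ j, p t j * z j) ≤ (∑ j, p t j * x t i j) →
      multiPotential (Finset.univ_nonempty_iff.mpr ⟨⟨0, hT⟩⟩) p x v lam
          (Function.update (x t) i z) ≤
        multiPotential (Finset.univ_nonempty_iff.mpr ⟨⟨0, hT⟩⟩) p x v lam (x t) := by
  intro t i z hz
  rw [multiPotential_apply_self _ p x v lam hAfriat]
  calc _ ≤ v t + ∑ i', lam t i' * ∑ j, p t j * (Function.update (x t) i z i' j - x t i' j) :=
        multiPotential_le _ p x v lam t _
    _ = v t + lam t i * ∑ j, p t j * (z j - x t i j) := by rw [sum_mul_sum_update_sub]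
    _ ≤ v t := add_le_of_nonpos_right
        (mul_nonpos_of_nonneg_of_nonpos (hlam t i).le (sum_mul_sub_nonpos_of_le hz))

/-- If the multi-agent Afriat inequalities hold with positive multipliers, the
data is consistent with Nash play w.r.t. the constructed potential: for each
observation `t` and each agent `i`, the observed action `x t i` maximizes
`z ↦ V̂ (update (x t) i z)` over the budget set `{z : p t ⬝ z ≤ p t ⬝ x t i}`. -/
theorem multi_afriat_nash_play {m n T : ℕ} (hT : 0 < T)
    (p : Fin T → Fin m → ℝ) (x : Fin T → Fin n → Fin m → ℝ)
    (v : Fin T → ℝ) (lam : Fin T → Fin n → ℝ)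
    (hp : ∀ t j, 0 < p t j)
    (hlam : ∀ t i, 0 < lam t i)
    (hAfriat : ∀ t τ : Fin T,
      v τ - v t - ∑ i, lam t i * ∑ j, p t j * (x τ i j - x t i j) ≤ 0) :
    ∀ t : Fin T, ∀ i : Fin n, ∀ z : Fin m → ℝ,
      (∑ j, p t j * z j) ≤ (∑ j, p t j * x t i j) →
      multiPotential (Finset.univ_nonempty_iff.mpr ⟨⟨0, hT⟩⟩) p x v lam
          (Function.update (x t) i z) ≤
        multiPotential (Finset.univ_nonempty_iff.mpr ⟨⟨0, hT⟩⟩) p x v lam (x t) :=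
  multi_afriat_nash_play_general hT p x v lam hlam hAfriat
end

section
/- Let p_t ∈ ℝ^m, x_t^i ∈ ℝ^m, and w_t^i ∈ ℝ^m (t = 1,…,T, i = 1,…,n), and set y_t^i = x_t^i + w_t^i. Suppose scalars v_t ∈ ℝ and λ_t^i > 0 satisfy v_τ − v_t − Σ_{i=1}^n λ_t^i p_t·(x_τ^i − x_t^i) ≤ 0 for all t, τ. Define M = max_{t,τ ∈ {1,…,T}} Σ_{i=1}^n |p_t·(w_t^i − w_τ^i)|. Then for all t, τ ∈ {1,…,T}: v_τ − v_t − Σ_{i=1}^n λ_t^i p_t·(y_τ^i − y_t^i) − (Σ_{i=1}^n λ_t^i)·M ≤ 0. Consequently (Φ, λ, v) = (M, λ, v) is feasible for the noisy test program, and the optimal value Φ*(y) of that program (the infimum of Φ ≥ 0 such that there exist v_t ∈ ℝ and λ_t^i > 0 with v_τ − v_t − Σ_i λ_t^i p_t·(y_τ^i − y_t^i) − Σ_i λ_t^i Φ ≤ 0 for all t, τ) satisfies Φ*(y) ≤ M. -/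
/-!
The noise enters the Afriat inequalities for `y = x + w` only through the terms
`λ_t^i p_t·(w_t^i − w_τ^i)`, each of which is at most `λ_t^i M` since `λ_t^i > 0`.
So the clean certificate `(v, λ)` remains feasible for the noisy program with slack `Φ = M`,
and `Φ*(y) ≤ M` because the feasible set is bounded below by `0`.
-/

/-- The noise bound `M = max_{t,τ} ∑ i, |p t ⬝ (w t i - w τ i)|`. -/
noncomputable def noiseBound {m n T : ℕ}
    (hne : (Finset.univ : Finset (Fin T × Fin T)).Nonempty)
    (p : Fin T → Fin m → ℝ) (w : Fin T → Fin n → Fin m → ℝ) : ℝ :=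
  Finset.univ.sup' hne fun tt =>
    ∑ i, |∑ j, p tt.1 j * (w tt.1 i j - w tt.2 i j)|

section NoisyAfriat

variable {m n T : ℕ}

theorem noiseBound_nonneg (hne : (Finset.univ : Finset (Fin T × Fin T)).Nonempty)
    (p : Fin T → Fin m → ℝ) (w : Fin T → Fin n → Fin m → ℝ) :
    0 ≤ noiseBound hne p w := by
  obtain ⟨tt, htt⟩ := hne
  exact Finset.le_sup'_of_le _ htt (Finset.sum_nonneg fun i _ => abs_nonneg _)

theorem inner_noise_le_noiseBound (hne : (Finset.univ : Finset (Fin T × Fin T)).Nonempty)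
    (p : Fin T → Fin m → ℝ) (w : Fin T → Fin n → Fin m → ℝ) (t τ : Fin T) (i : Fin n) :
    ∑ j, p t j * (w t i j - w τ i j) ≤ noiseBound hne p w :=
  calc ∑ j, p t j * (w t i j - w τ i j)
      ≤ |∑ j, p t j * (w t i j - w τ i j)| := le_abs_self _
    _ ≤ ∑ i', |∑ j, p t j * (w t i' j - w τ i' j)| :=
        Finset.single_le_sum (f := fun i' => |∑ j, p t j * (w t i' j - w τ i' j)|)
          (fun _ _ => abs_nonneg _) (Finset.mem_univ i)
    _ ≤ noiseBound hne p w := Finset.le_sup' (fun tt : Fin T × Fin T =>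
          ∑ i', |∑ j, p tt.1 j * (w tt.1 i' j - w tt.2 i' j)|) (Finset.mem_univ (t, τ))

theorem sum_mul_le_sum_mul_of_le {ι : Type*} (s : Finset ι) {lam a : ι → ℝ} {M : ℝ}
    (hlam : ∀ i ∈ s, 0 ≤ lam i) (ha : ∀ i ∈ s, a i ≤ M) :
    ∑ i ∈ s, lam i * a i ≤ (∑ i ∈ s, lam i) * M := by
  rw [Finset.sum_mul]
  exact Finset.sum_le_sum fun i hi => mul_le_mul_of_nonneg_left (ha i hi) (hlam i hi)

theorem weighted_afriat_sum_add_noise (p : Fin m → ℝ) {x w y : Fin n → Fin m → ℝ}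
    {x' w' y' : Fin n → Fin m → ℝ} (hy : ∀ i j, y i j = x i j + w i j)
    (hy' : ∀ i j, y' i j = x' i j + w' i j) (lam : Fin n → ℝ) :
    ∑ i, lam i * ∑ j, p j * (y' i j - y i j)
      = ∑ i, lam i * ∑ j, p j * (x' i j - x i j) - ∑ i, lam i * ∑ j, p j * (w i j - w' i j) := by
  simp only [hy, hy', ← Finset.sum_sub_distrib, ← mul_sub]
  exact Finset.sum_congr rfl fun i _ => congrArg _ <| Finset.sum_congr rfl fun j _ => by ring

theorem relaxed_afriat_of_afriat (p : Fin T → Fin m → ℝ) {x w y : Fin T → Fin n → Fin m → ℝ}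
    (hy : ∀ t i j, y t i j = x t i j + w t i j) {v : Fin T → ℝ} {lam : Fin T → Fin n → ℝ}
    (hlam : ∀ t i, 0 ≤ lam t i)
    (hAfriat : ∀ t τ : Fin T,
      v τ - v t - ∑ i, lam t i * ∑ j, p t j * (x τ i j - x t i j) ≤ 0)
    {M : ℝ} (hM : ∀ t τ i, ∑ j, p t j * (w t i j - w τ i j) ≤ M) (t τ : Fin T) :
    v τ - v t - (∑ i, lam t i * ∑ j, p t j * (y τ i j - y t i j)) - (∑ i, lam t i) * M ≤ 0 := by
  have hnoise := sum_mul_le_sum_mul_of_le Finset.univ (fun i _ => hlam t i)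
    (fun i _ => hM t τ i)
  rw [weighted_afriat_sum_add_noise (p t) (hy t) (hy τ)]
  linarith [hAfriat t τ]

end NoisyAfriat

/-- If the clean data `x` satisfies the multi-agent Afriat inequalities, then
the noisy data `y = x + w` satisfies the relaxed inequalities with slack
`(∑ i, λ t i) * M`, and hence the optimal value `Φ*` of the noisy test program
is at most `M`. -/
theorem noisy_test_statistic_bounded {m n T : ℕ} (hT : 0 < T)
    (p : Fin T → Fin m → ℝ) (x w y : Fin T → Fin n → Fin m → ℝ)
    (hy : ∀ t i j, y t i j = x t i j + w t i j)
    (v : Fin T → ℝ) (lam : Fin T → Fin n → ℝ)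
    (hlam : ∀ t i, 0 < lam t i)
    (hAfriat : ∀ t τ : Fin T,
      v τ - v t - ∑ i, lam t i * ∑ j, p t j * (x τ i j - x t i j) ≤ 0) :
    (∀ t τ : Fin T,
      v τ - v t - (∑ i, lam t i * ∑ j, p t j * (y τ i j - y t i j))
        - (∑ i, lam t i) *
            noiseBound (Finset.univ_nonempty_iff.mpr ⟨(⟨0, hT⟩, ⟨0, hT⟩)⟩) p w ≤ 0) ∧
    sInf {Φ : ℝ | 0 ≤ Φ ∧ ∃ (v' : Fin T → ℝ) (lam' : Fin T → Fin n → ℝ),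
        (∀ t i, 0 < lam' t i) ∧
        ∀ t τ : Fin T,
          v' τ - v' t - (∑ i, lam' t i * ∑ j, p t j * (y τ i j - y t i j))
            - (∑ i, lam' t i) * Φ ≤ 0}
      ≤ noiseBound (Finset.univ_nonempty_iff.mpr ⟨(⟨0, hT⟩, ⟨0, hT⟩)⟩) p w := by
  have hne : (Finset.univ : Finset (Fin T × Fin T)).Nonempty := ⟨(⟨0, hT⟩, ⟨0, hT⟩), Finset.mem_univ _⟩
  have feasible := relaxed_afriat_of_afriat p hy (fun t i => (hlam t i).le) hAfriat
    (inner_noise_le_noiseBound hne p w)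
  exact ⟨feasible, csInf_le ⟨0, fun Φ hΦ => hΦ.1⟩ ⟨noiseBound_nonneg hne p w, v, lam, hlam, feasible⟩⟩
end
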